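/- (Score of the output density, y-derivative) For every a > 0 and y ∈ ℝ, the output density of the additive Gaussian noise channel satisfies ∂/∂y log f_Y(y;a) = − ∫ (y−x) f_X(x) φ_a(y−x) dx / (a · f_Y(y;a)), where φ_a(u) = (2πa)^{−1/2} exp(−u²/(2a)). -/

import Mathlib

/-
Differentiating `log f_Y` gives `∂_y f_Y / f_Y`. Since `φ_a' (u) = -(u / a) φ_a(u)` and
`|u| φ_a(u) ≤ √a φ_a(0)`, the `y`-derivative of the integrand `f_X(x) φ_a(y - x)` is dominated
by a constant multiple of the integrable `f_X`, so `∂_y f_Y` may be computed under the integral;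
`f_Y > 0` because `φ_a > 0` and `f_X` has total mass `1`.
-/

open MeasureTheory Filter

noncomputable def gaussKernel (a u : ℝ) : ℝ :=
  (Real.sqrt (2 * Real.pi * a))⁻¹ * Real.exp (-u ^ 2 / (2 * a))

namespace gaussKernel

variable {a : ℝ}

lemma pos (ha : 0 < a) (u : ℝ) : 0 < gaussKernel a u := by
  unfold gaussKernel; have := Real.sqrt_pos.2 (by positivity : 0 < 2 * Real.pi * a); positivity

lemma le_inv_sqrt (ha : 0 ≤ a) (u : ℝ) : gaussKernel a u ≤ (Real.sqrt (2 * Real.pi * a))⁻¹ :=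
  mul_le_of_le_one_right (by positivity) <| Real.exp_le_one_iff.2 <|
    div_nonpos_of_nonpos_of_nonneg (by nlinarith [sq_nonneg u]) (by positivity)

@[fun_prop]
lemma continuous (a : ℝ) : Continuous (gaussKernel a) := by
  unfold gaussKernel; fun_prop

lemma hasDerivAt (ha : a ≠ 0) (u : ℝ) :
    HasDerivAt (gaussKernel a) (-(u / a) * gaussKernel a u) u := by
  have h := (((hasDerivAt_id u).pow 2).neg.div_const (2 * a)).exp.const_mul
    (Real.sqrt (2 * Real.pi * a))⁻¹
  refine h.congr_deriv ?_
  simp only [gaussKernel, id, Pi.neg_apply, Pi.pow_apply]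
  field_simp
  ring

lemma abs_le_sqrt_mul_exp (ha : 0 < a) (u : ℝ) :
    |u| ≤ Real.sqrt a * Real.exp (u ^ 2 / (2 * a)) := by
  have hsa := Real.sqrt_pos.2 ha
  calc |u| ≤ Real.sqrt a * (u ^ 2 / (2 * a) + 1) := by
        have hs : Real.sqrt a ^ 2 = a := Real.sq_sqrt ha.le
        rw [div_add_one (by positivity), mul_div_assoc', le_div_iff₀ (by positivity), ← sq_abs u]
        nlinarith [mul_nonneg hsa.le (sq_nonneg (|u| - Real.sqrt a))]
    _ ≤ _ := by gcongr; exact Real.add_one_le_exp _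

lemma abs_mul_le (ha : 0 < a) (u : ℝ) :
    |u| * gaussKernel a u ≤ Real.sqrt a * (Real.sqrt (2 * Real.pi * a))⁻¹ := by
  calc |u| * gaussKernel a u
      ≤ Real.sqrt a * Real.exp (u ^ 2 / (2 * a)) * gaussKernel a u :=
        mul_le_mul_of_nonneg_right (abs_le_sqrt_mul_exp ha u) (pos ha u).le
    _ = _ := by
        rw [gaussKernel, neg_div, Real.exp_neg]
        field_simp [Real.exp_ne_zero]

end gaussKernel

section Convolution

variable {μ : Measure ℝ} {f k k' : ℝ → ℝ}

lemma integrable_mul_comp_sub (hf : Integrable f μ) (hk : Continuous k) {B : ℝ}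
    (hkB : ∀ u, |k u| ≤ B) (y : ℝ) : Integrable (fun x => f x * k (y - x)) μ :=
  hf.mul_bdd (hk.comp (continuous_sub_left y)).aestronglyMeasurable
    (ae_of_all _ fun x => hkB (y - x))

lemma hasDerivAt_integral_mul_comp_sub (hf : Integrable f μ) {B C : ℝ}
    (hkB : ∀ u, |k u| ≤ B) (hk' : ∀ u, HasDerivAt k (k' u) u) (hk'c : Continuous k')
    (hk'C : ∀ u, |k' u| ≤ C) (y : ℝ) :
    HasDerivAt (fun y => ∫ x, f x * k (y - x) ∂μ) (∫ x, f x * k' (y - x) ∂μ) y := by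
  have hk : Continuous k := continuous_iff_continuousAt.2 fun u => (hk' u).continuousAt
  refine (hasDerivAt_integral_of_dominated_loc_of_deriv_le (F := fun y x => f x * k (y - x))
    (F' := fun y x => f x * k' (y - x)) (bound := fun x => |f x| * C)
    univ_mem (Eventually.of_forall fun y => (integrable_mul_comp_sub hf hk hkB y).1)
    (integrable_mul_comp_sub hf hk hkB y)
    (hf.1.mul (hk'c.comp (continuous_sub_left y)).aestronglyMeasurable) ?_ (hf.abs.mul_const C)
    ?_).2
  · refine ae_of_all _ fun x y _ => ?_
    rw [Real.norm_eq_abs, abs_mul]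
    exact mul_le_mul_of_nonneg_left (hk'C _) (abs_nonneg _)
  · refine ae_of_all _ fun x y _ => ?_
    have hshift : HasDerivAt (fun y => y - x) 1 y := (hasDerivAt_id y).sub_const x
    simpa using ((hk' (y - x)).comp y hshift).const_mul (f x)

lemma integral_mul_pos (hf0 : ∀ x, 0 ≤ f x) (hf : 0 < ∫ x, f x ∂μ) (hk : ∀ u, 0 < k u)
    (hfk : Integrable (fun x => f x * k x) μ) : 0 < ∫ x, f x * k x ∂μ := by
  rw [integral_pos_iff_support_of_nonneg (fun x => mul_nonneg (hf0 x) (hk x).le) hfk]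
  rw [integral_pos_iff_support_of_nonneg hf0 (.of_integral_ne_zero hf.ne')] at hf
  rwa [Function.support_mul, Function.support_eq_univ fun u => (hk u).ne', Set.inter_univ]

end Convolution

theorem output_score_y_derivative_general
    (fX : ℝ → ℝ)
    (hfX_nonneg : ∀ x, 0 ≤ fX x)
    (hfX_prob : (∫ x, fX x) = 1)
    (phi : ℝ → ℝ → ℝ)
    (hphi : ∀ a u, phi a u =
      (Real.sqrt (2 * Real.pi * a))⁻¹ * Real.exp (-u ^ 2 / (2 * a)))
    (fY : ℝ → ℝ → ℝ)
    (hfY : ∀ a, 0 < a → ∀ y, fY a y = ∫ x, fX x * phi a (y - x)) :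
    ∀ a, 0 < a → ∀ y : ℝ,
      deriv (fun y' => Real.log (fY a y')) y =
        -(∫ x, (y - x) * fX x * phi a (y - x)) / (a * fY a y) := by
  intro a ha y
  obtain rfl : phi = gaussKernel := funext₂ hphi
  simp only [hfY a ha]
  have hfX : Integrable fX := .of_integral_ne_zero (by rw [hfX_prob]; exact one_ne_zero)
  have hkB (u : ℝ) : |gaussKernel a u| ≤ (Real.sqrt (2 * Real.pi * a))⁻¹ := by
    rw [abs_of_pos (gaussKernel.pos ha u)]; exact gaussKernel.le_inv_sqrt ha.le u
  have hk'C (u : ℝ) : |-(u / a) * gaussKernel a u| ≤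
      Real.sqrt a * (Real.sqrt (2 * Real.pi * a))⁻¹ / a := by
    rw [abs_mul, abs_neg, abs_div, abs_of_pos ha, div_mul_eq_mul_div]
    gcongr ?_ / a
    rw [abs_of_pos (gaussKernel.pos ha u)]
    exact gaussKernel.abs_mul_le ha u
  have hderiv := hasDerivAt_integral_mul_comp_sub (μ := volume) hfX hkB
    (gaussKernel.hasDerivAt ha.ne') (by fun_prop) hk'C y
  have hpos : 0 < ∫ x, fX x * gaussKernel a (y - x) :=
    integral_mul_pos hfX_nonneg (by rw [hfX_prob]; exact one_pos) (fun x => gaussKernel.pos ha _)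
      (integrable_mul_comp_sub hfX (gaussKernel.continuous a) hkB y)
  rw [(hderiv.log hpos.ne').deriv]
  have hscore : ∫ x, fX x * (-((y - x) / a) * gaussKernel a (y - x)) =
      -(∫ x, (y - x) * fX x * gaussKernel a (y - x)) / a := by
    rw [← integral_neg, ← integral_div]
    congr 1 with x
    ring
  rw [hscore]
  field_simp

/-- **Score of the output density with respect to `y`.**
For the additive Gaussian noise channel,
`∂/∂y log f_Y(y;a) = −E_X[(y−X) φ_a(y−X)]/(a·f_Y(y;a))`. -/
theorem output_score_y_derivative
    (fX : ℝ → ℝ)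
    (hfX_nonneg : ∀ x, 0 ≤ fX x)
    (hfX_prob : (∫ x, fX x) = 1)
    (hfX_mom : Integrable (fun x => x ^ 2 * fX x))
    (phi : ℝ → ℝ → ℝ)
    (hphi : ∀ a u, phi a u =
      (Real.sqrt (2 * Real.pi * a))⁻¹ * Real.exp (-u ^ 2 / (2 * a)))
    (fY : ℝ → ℝ → ℝ)
    (hfY : ∀ a, 0 < a → ∀ y, fY a y = ∫ x, fX x * phi a (y - x)) :
    ∀ a, 0 < a → ∀ y : ℝ,
      deriv (fun y' => Real.log (fY a y')) y =
        -(∫ x, (y - x) * fX x * phi a (y - x)) / (a * fY a y) :=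
  output_score_y_derivative_general fX hfX_nonneg hfX_prob phi hphi fY hfY
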